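/- arXiv:math/0609841 — 4 statements merged into one kernel-verified Lean document; each statement's English description precedes it below -/
import Mathlib

section
/- Let n ≥ 1, let λ > 0, and let c₁, …, cₙ be distinct nonzero real numbers. Then ∫_{{z ∈ ℂⁿ : ∑_{j=1}^{n} |z_j|² ≤ λ}} exp(−∑_{j=1}^{n} c_j |z_j|²) dz = πⁿ · ( ∏_{j=1}^{n} c_j^{-1} − ∑_{i=1}^{n} e^{−λ c_i} / ( c_i ∏_{j≠i} (c_j − c_i) ) ). -/
open MeasureTheory Real Finset

/-!
Integrate out the first coordinate. Over `w ∈ ℂⁿ⁻¹` the first variable ranges over the disc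
`‖x‖² ≤ λ - ∑ ‖w j‖²`, on which `∫ exp (-b‖x‖²) = π / b * (1 - exp (-b (λ - ∑ ‖w j‖²)))`,
and `exp (b ∑ ‖w j‖²)` merges into the remaining Gaussian weight by shifting every `d j` to
`d j - b`. So the integral `I` satisfies `I (b, d) = π / b * (I d - exp (-bλ) * I (d - b))`.
The fixed-point sum satisfies the same recursion, by the partial fraction
`1 / (d (b - d)) = b⁻¹ (1 / d - 1 / (d - b))`, and both equal `1` in dimension `0`.
-/

theorem integral_closedBall_exp_neg_mul_norm_sq {b r : ℝ} (hb : b ≠ 0) (hr : 0 ≤ r) :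
    ∫ z in Metric.closedBall (0 : ℂ) r, exp (-(b * ‖z‖ ^ 2)) =
      π / b * (1 - exp (-(b * r ^ 2))) := by
  have hradial : (Metric.closedBall (0 : ℂ) r).indicator (fun z => exp (-(b * ‖z‖ ^ 2))) =
      fun z => (Set.Iic r).indicator (fun y => exp (-(b * y ^ 2))) ‖z‖ := by
    ext z
    simp only [Set.indicator, Metric.mem_closedBall, dist_zero_right, Set.mem_Iic]
  have hderiv : ∀ y : ℝ, HasDerivAt (fun y => -(exp (-(b * y ^ 2)) / (2 * b)))
      (y * exp (-(b * y ^ 2))) y := by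
    intro y
    refine (((hasDerivAt_pow 2 y).const_mul b).fun_neg.exp.div_const (2 * b)).fun_neg.congr_deriv
      ?_
    field_simp
    ring
  rw [← integral_indicator Metric.isClosed_closedBall.measurableSet, hradial,
    integral_fun_norm_addHaar volume fun y => (Set.Iic r).indicator (fun y => exp (-(b * y ^ 2))) y,
    Complex.finrank_real_complex]
  simp only [Nat.add_one_sub_one, pow_one, smul_eq_mul,
    ← Set.indicator_mul_right _ (fun y : ℝ => y)]
  rw [setIntegral_indicator measurableSet_Iic, Set.Ioi_inter_Iic,
    ← intervalIntegral.integral_of_le hr, Measure.real, Complex.volume_ball,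
    intervalIntegral.integral_eq_sub_of_hasDerivAt (fun y _ => hderiv y)
      ((continuous_id.mul (by fun_prop)).intervalIntegrable _ _)]
  simp
  field_simp
  ring

theorem integral_fin_succ_eq_integral_integral_cons {E F : Type*} [MeasureSpace E]
    [SigmaFinite (volume : Measure E)] [NormedAddCommGroup F] [NormedSpace ℝ F] {n : ℕ}
    {f : (Fin (n + 1) → E) → F} (hf : Integrable f) :
    ∫ z, f z = ∫ w : Fin n → E, ∫ x : E, f (Fin.cons x w) := by
  have hcons := (volume_preserving_piFinSuccAbove (fun _ : Fin (n + 1) => E) 0).symm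
  rw [← hcons.integral_comp', Measure.volume_eq_prod]
  refine (integral_prod_symm _ ?_).trans ?_
  · exact (hcons.integrable_comp_emb (MeasurableEquiv.measurableEmbedding _)).2 hf
  · simp [MeasurableEquiv.piFinSuccAbove_symm_apply, Fin.insertNthEquiv, Fin.insertNth_zero']

theorem Fin.prod_univ_erase_zero {M : Type*} [CommMonoid M] {n : ℕ} (f : Fin (n + 1) → M) :
    ∏ j ∈ univ.erase 0, f j = ∏ j : Fin n, f j.succ := by
  rw [Fin.univ_succ, Finset.erase_cons, Finset.prod_map]
  rfl

theorem Fin.prod_univ_erase_succ {M : Type*} [CommMonoid M] {n : ℕ} (f : Fin (n + 1) → M)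
    (i : Fin n) : ∏ j ∈ univ.erase i.succ, f j = f 0 * ∏ j ∈ univ.erase i, f j.succ := by
  rw [Fin.univ_succ, Finset.erase_cons_of_ne _ (Fin.succ_ne_zero i).symm, Finset.prod_cons]
  congr 1
  exact (congrArg (∏ x ∈ ·, f x) (Finset.map_erase _ univ i)).symm.trans (Finset.prod_map _ _ _)

def sumNormSqLe (n : ℕ) (lam : ℝ) : Set (Fin n → ℂ) := {z | ∑ j, ‖z j‖ ^ 2 ≤ lam}

noncomputable def gaussianWeight {n : ℕ} (c : Fin n → ℝ) (z : Fin n → ℂ) : ℝ :=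
  exp (-∑ j, c j * ‖z j‖ ^ 2)

noncomputable def cutGaussianIntegral {n : ℕ} (c : Fin n → ℝ) (lam : ℝ) : ℝ :=
  ∫ z in sumNormSqLe n lam, gaussianWeight c z

noncomputable def fixedPointSum {n : ℕ} (c : Fin n → ℝ) (lam : ℝ) : ℝ :=
  π ^ n * ((∏ j, (c j)⁻¹) -
    ∑ i, exp (-lam * c i) / (c i * ∏ j ∈ univ.erase i, (c j - c i)))

section

variable {n : ℕ} {lam : ℝ}

theorem isCompact_sumNormSqLe : IsCompact (sumNormSqLe n lam) := by
  refine Metric.isCompact_of_isClosed_isBounded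
    (isClosed_le (by fun_prop) continuous_const) ?_
  refine (Metric.isBounded_closedBall (x := 0) (r := √lam)).subset fun z hz => ?_
  rw [mem_closedBall_zero_iff, pi_norm_le_iff_of_nonneg (Real.sqrt_nonneg lam)]
  intro i
  simpa using Real.abs_le_sqrt
    ((single_le_sum (f := fun j => ‖z j‖ ^ 2) (fun j _ => by positivity) (mem_univ i)).trans hz)

theorem measurableSet_sumNormSqLe : MeasurableSet (sumNormSqLe n lam) :=
  isCompact_sumNormSqLe.isClosed.measurableSet

theorem integrable_indicator_gaussianWeight (c : Fin n → ℝ) :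
    Integrable ((sumNormSqLe n lam).indicator (gaussianWeight c)) :=
  (ContinuousOn.integrableOn_compact isCompact_sumNormSqLe
    (by unfold gaussianWeight; fun_prop)).integrable_indicator measurableSet_sumNormSqLe

theorem cons_mem_sumNormSqLe_iff {x : ℂ} {w : Fin n → ℂ} :
    Fin.cons x w ∈ sumNormSqLe (n + 1) lam ↔ ‖x‖ ^ 2 + ∑ j, ‖w j‖ ^ 2 ≤ lam := by
  simp [sumNormSqLe, Fin.sum_univ_succ]

theorem gaussianWeight_cons (b : ℝ) (d : Fin n → ℝ) (x : ℂ) (w : Fin n → ℂ) :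
    gaussianWeight (Fin.cons b d) (Fin.cons x w) =
      exp (-(b * ‖x‖ ^ 2)) * gaussianWeight d w := by
  simp [gaussianWeight, Fin.sum_univ_succ, exp_add, mul_comm]

theorem gaussianWeight_sub_const (d : Fin n → ℝ) (b : ℝ) (w : Fin n → ℂ) :
    gaussianWeight (fun j => d j - b) w = exp (b * ∑ j, ‖w j‖ ^ 2) * gaussianWeight d w := by
  simp only [gaussianWeight, ← exp_add, sub_mul, sum_sub_distrib, mul_sum]
  ring_nf

theorem integral_indicator_gaussianWeight_cons {b : ℝ} (hb : b ≠ 0) (d : Fin n → ℝ)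
    (w : Fin n → ℂ) :
    ∫ x : ℂ,
        (sumNormSqLe (n + 1) lam).indicator (gaussianWeight (Fin.cons b d)) (Fin.cons x w) =
      π / b * ((sumNormSqLe n lam).indicator (gaussianWeight d) w -
        exp (-(b * lam)) * (sumNormSqLe n lam).indicator (gaussianWeight fun j => d j - b) w) := by
  set s := ∑ j, ‖w j‖ ^ 2
  by_cases hw : s ≤ lam
  · have hslice : ∀ x : ℂ,
        (sumNormSqLe (n + 1) lam).indicator (gaussianWeight (Fin.cons b d)) (Fin.cons x w) =
          (Metric.closedBall 0 √(lam - s)).indicator (fun x => exp (-(b * ‖x‖ ^ 2))) x *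
            gaussianWeight d w := by
      intro x
      simp only [Set.indicator, cons_mem_sumNormSqLe_iff, gaussianWeight_cons,
        mem_closedBall_zero_iff, Real.le_sqrt (norm_nonneg x) (sub_nonneg.2 hw), le_sub_iff_add_le,
        ite_mul, zero_mul, s]
    rw [integral_congr_ae (.of_forall hslice), integral_mul_const, integral_indicator
      Metric.isClosed_closedBall.measurableSet, integral_closedBall_exp_neg_mul_norm_sq hb
      (Real.sqrt_nonneg _), Real.sq_sqrt (sub_nonneg.2 hw),
      Set.indicator_of_mem (show w ∈ sumNormSqLe n lam from hw),
      Set.indicator_of_mem (show w ∈ sumNormSqLe n lam from hw), gaussianWeight_sub_const]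
    have hexp : exp (-(b * (lam - s))) = exp (-(b * lam)) * exp (b * s) := by
      rw [← exp_add]; ring_nf
    rw [hexp]
    ring
  · have hempty : ∀ x : ℂ,
        (sumNormSqLe (n + 1) lam).indicator (gaussianWeight (Fin.cons b d)) (Fin.cons x w) = 0 :=
      fun x => Set.indicator_of_notMem (fun hx => hw (by
        have := cons_mem_sumNormSqLe_iff.1 hx; nlinarith [sq_nonneg ‖x‖])) _
    simp [hempty, Set.indicator_of_notMem (show w ∉ sumNormSqLe n lam from hw)]

theorem cutGaussianIntegral_cons {b : ℝ} (hb : b ≠ 0) (d : Fin n → ℝ) :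
    cutGaussianIntegral (Fin.cons b d) lam =
      π / b * (cutGaussianIntegral d lam -
        exp (-(b * lam)) * cutGaussianIntegral (fun j => d j - b) lam) := by
  simp only [cutGaussianIntegral, ← integral_indicator measurableSet_sumNormSqLe]
  rw [integral_fin_succ_eq_integral_integral_cons (integrable_indicator_gaussianWeight _)]
  simp only [integral_indicator_gaussianWeight_cons hb]
  rw [integral_const_mul, integral_sub (integrable_indicator_gaussianWeight _)
    ((integrable_indicator_gaussianWeight _).const_mul _), integral_const_mul]

theorem cutGaussianIntegral_fin_zero (c : Fin 0 → ℝ) (hlam : 0 ≤ lam) :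
    cutGaussianIntegral c lam = 1 := by
  have : sumNormSqLe 0 lam = Set.univ := by
    ext z; simp [sumNormSqLe, hlam]
  simp [cutGaussianIntegral, this, gaussianWeight, Measure.real, volume_pi]

theorem fixedPointSum_fin_zero (c : Fin 0 → ℝ) : fixedPointSum c lam = 1 := by
  simp [fixedPointSum]

theorem fixedPointSum_cons {b : ℝ} (hb : b ≠ 0) {d : Fin n → ℝ} (hd : ∀ j, d j ≠ 0)
    (hdb : ∀ j, d j ≠ b) :
    fixedPointSum (Fin.cons b d) lam =
      π / b * (fixedPointSum d lam - exp (-(b * lam)) * fixedPointSum (fun j => d j - b) lam) := by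
  have hterm : ∀ i, exp (-lam * d i) / (d i * ((b - d i) * ∏ j ∈ univ.erase i, (d j - d i))) =
      b⁻¹ * (exp (-lam * d i) / (d i * ∏ j ∈ univ.erase i, (d j - d i)) -
        exp (-(b * lam)) * (exp (-lam * (d i - b)) /
          ((d i - b) * ∏ j ∈ univ.erase i, (d j - b - (d i - b))))) := by
    intro i
    have hdi := hd i
    have hdib : d i - b ≠ 0 := sub_ne_zero.2 (hdb i)
    have hbdi : b - d i ≠ 0 := sub_ne_zero.2 (hdb i).symm
    have hexp : exp (-(b * lam)) * exp (-lam * (d i - b)) = exp (-lam * d i) := by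
      rw [← exp_add]; ring_nf
    simp only [sub_sub_sub_cancel_right, ← mul_div_assoc, hexp]
    rcases eq_or_ne (∏ j ∈ univ.erase i, (d j - d i)) 0 with hP | hP
    · simp [hP]
    · field_simp
      ring
  simp only [fixedPointSum, Fin.prod_univ_succ, Fin.sum_univ_succ, Fin.cons_zero, Fin.cons_succ,
    Fin.prod_univ_erase_zero, Fin.prod_univ_erase_succ, hterm, ← mul_sum, sum_sub_distrib,
    prod_inv_distrib]
  rw [neg_mul, mul_comm lam b]
  ring

theorem cutGaussianIntegral_eq_fixedPointSum (hlam : 0 ≤ lam) :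
    ∀ {n : ℕ} (c : Fin n → ℝ), (∀ j, c j ≠ 0) → Function.Injective c →
      cutGaussianIntegral c lam = fixedPointSum c lam
  | 0, c, _, _ => by rw [cutGaussianIntegral_fin_zero c hlam, fixedPointSum_fin_zero]
  | n + 1, c, hc0, hinj => by
    induction c using Fin.consCases with
    | cons b d =>
      rw [Fin.cons_injective_iff] at hinj
      have hb : b ≠ 0 := hc0 0
      have hd : ∀ j, d j ≠ 0 := fun j => by simpa using hc0 j.succ
      have hdb : ∀ j, d j ≠ b := fun j h => hinj.1 ⟨j, h⟩
      rw [cutGaussianIntegral_cons hb, fixedPointSum_cons hb hd hdb,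
        cutGaussianIntegral_eq_fixedPointSum hlam d hd hinj.2,
        cutGaussianIntegral_eq_fixedPointSum hlam (fun j => d j - b)
          (fun j => sub_ne_zero.2 (hdb j)) (sub_left_injective.comp hinj.2)]

end

theorem symplectic_cut_gaussian_fixed_point_formula_general
    (n : ℕ) (lam : ℝ) (hlam : 0 < lam)
    (c : Fin n → ℝ) (hc0 : ∀ j, c j ≠ 0) (hcinj : Function.Injective c) :
    (∫ z in {z : Fin n → ℂ | ∑ j, ‖z j‖ ^ 2 ≤ lam},
        Real.exp (-∑ j, c j * ‖z j‖ ^ 2)) =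
      π ^ n * ((∏ j, (c j)⁻¹) -
        ∑ i, Real.exp (-lam * c i) /
          (c i * ∏ j ∈ Finset.univ.erase i, (c j - c i))) :=
  cutGaussianIntegral_eq_fixedPointSum hlam.le c hc0 hcinj

/-- The Duistermaat–Heckman fixed-point formula for the symplectic cut of `ℂⁿ` at level `λ`
with respect to the diagonal circle action: for distinct nonzero reals `c₁, …, cₙ`,
`∫_{∑|zⱼ|² ≤ λ} exp(−∑ cⱼ|zⱼ|²) dz
  = πⁿ (∏ⱼ cⱼ⁻¹ − ∑ᵢ e^{−λcᵢ} / (cᵢ ∏_{j≠i} (cⱼ − cᵢ)))`. -/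
theorem symplectic_cut_gaussian_fixed_point_formula
    (n : ℕ) (hn : 1 ≤ n) (lam : ℝ) (hlam : 0 < lam)
    (c : Fin n → ℝ) (hc0 : ∀ j, c j ≠ 0) (hcinj : Function.Injective c) :
    (∫ z in {z : Fin n → ℂ | ∑ j, ‖z j‖ ^ 2 ≤ lam},
        Real.exp (-∑ j, c j * ‖z j‖ ^ 2)) =
      π ^ n * ((∏ j, (c j)⁻¹) -
        ∑ i, Real.exp (-lam * c i) /
          (c i * ∏ j ∈ Finset.univ.erase i, (c j - c i))) :=
  symplectic_cut_gaussian_fixed_point_formula_general n lam hlam c hc0 hcinj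
end

section
/- Let m ≥ 1, let a₁, …, aₘ be pairwise distinct complex numbers, let p ∈ ℂ[X] be a polynomial, let λ ∈ ℂ, and let R > max_i |a_i|. Then (1/(2πi)) ∮_{|z|=R} e^{λz} p(z) / ∏_{i=1}^{m} (z − a_i) dz = ∑_{i=1}^{m} e^{λ a_i} p(a_i) / ∏_{j≠i} (a_i − a_j). -/
open Finset Polynomial

/-! The partial-fraction expansion `1/∏ᵢ(z - aᵢ) = ∑ᵢ wᵢ/(z - aᵢ)`, with the barycentric
weights `wᵢ = 1/∏_{j≠i}(aᵢ - aⱼ)`, is the first barycentric form of the Lagrange interpolant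
of the constant `1`. Integrating it against `f` term by term, Cauchy's integral formula
turns each `∮ f(z)/(z - aᵢ) dz` into `2πi f(aᵢ)`. -/

namespace Lagrange

theorem inv_eval_nodal_eq_sum_nodalWeight_mul_inv_sub {F ι : Type*} [Field F] [DecidableEq ι]
    {s : Finset ι} {v : ι → F} {x : F} (hvs : Set.InjOn v s) (hs : s.Nonempty)
    (hx : ∀ i ∈ s, x ≠ v i) :
    (eval x (nodal s v))⁻¹ = ∑ i ∈ s, nodalWeight s v i * (x - v i)⁻¹ := by
  refine inv_eq_of_mul_eq_one_right ?_
  simpa only [Pi.one_apply, mul_one, interpolate_one hvs hs, eval_one] using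
    (eval_interpolate_not_at_node 1 hx).symm

end Lagrange

open Lagrange Metric in
theorem circleIntegral_inv_prod_sub_smul_eq_sum_nodalWeight_smul {E ι : Type*}
    [NormedAddCommGroup E] [NormedSpace ℂ E] [CompleteSpace E] [DecidableEq ι] {c : ℂ} {R : ℝ} {f : ℂ → E}
    {s : Finset ι} {a : ι → ℂ} (hf : DifferentiableOn ℂ f (closedBall c R))
    (hs : s.Nonempty) (ha : Set.InjOn a s) (ha_mem : ∀ i ∈ s, a i ∈ ball c R) :
    (∮ z in C(c, R), (∏ i ∈ s, (z - a i))⁻¹ • f z) =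
      (2 * Real.pi * Complex.I : ℂ) • ∑ i ∈ s, nodalWeight s a i • f (a i) := by
  obtain ⟨i₀, hi₀⟩ := hs
  have hR : 0 ≤ R := dist_nonneg.trans (mem_ball.mp (ha_mem i₀ hi₀)).le
  have h_ne : ∀ z ∈ sphere c R, ∀ i ∈ s, z ≠ a i := fun z hz i hi h =>
    (mem_ball.mp (ha_mem i hi)).ne (h ▸ mem_sphere.mp hz)
  have h_expand : Set.EqOn (fun z => (∏ i ∈ s, (z - a i))⁻¹ • f z)
      (fun z => ∑ i ∈ s, nodalWeight s a i • ((z - a i)⁻¹ • f z)) (sphere c R) := by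
    intro z hz
    simp only [← eval_nodal, inv_eval_nodal_eq_sum_nodalWeight_mul_inv_sub ha ⟨i₀, hi₀⟩
      (h_ne z hz), sum_smul, mul_smul]
  have h_int : ∀ i ∈ s, CircleIntegrable (fun z => nodalWeight s a i • ((z - a i)⁻¹ • f z)) c R :=
    fun i hi => ContinuousOn.circleIntegrable hR <| continuousOn_const.smul <|
      ((continuousOn_id.sub continuousOn_const).inv₀ fun z hz => sub_ne_zero.mpr
        (h_ne z hz i hi)).smul (hf.continuousOn.mono sphere_subset_closedBall)
  rw [circleIntegral.integral_congr hR h_expand, circleIntegral.integral_fun_sum h_int,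
    smul_sum]
  refine sum_congr rfl fun i hi => ?_
  rw [circleIntegral.integral_smul, hf.circleIntegral_sub_inv_smul (ha_mem i hi), smul_comm]

/-- The one-dimensional Jeffrey–Kirwan residue as a contour integral: for pairwise
distinct `a₁, …, aₘ ∈ ℂ`, a polynomial `p`, `λ ∈ ℂ` and a radius `R` exceeding all
`|aᵢ|`, the normalized circle integral of `e^{λz} p(z)/∏ᵢ(z − aᵢ)` over `|z| = R` equals
the sum of the residues `e^{λaᵢ} p(aᵢ)/∏_{j≠i}(aᵢ − aⱼ)` at all the simple poles. -/
theorem circleIntegral_exp_rational_eq_sum_residues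
    (m : ℕ) (hm : 1 ≤ m) (a : Fin m → ℂ) (ha : Function.Injective a)
    (p : Polynomial ℂ) (lam : ℂ) (R : ℝ) (hR : ∀ i, ‖a i‖ < R) :
    (1 / (2 * (Real.pi : ℂ) * Complex.I)) *
        (∮ z in C(0, R), Complex.exp (lam * z) * p.eval z / ∏ i, (z - a i)) =
      ∑ i, Complex.exp (lam * a i) * p.eval (a i) /
        ∏ j ∈ Finset.univ.erase i, (a i - a j) := by
  have hf : Differentiable ℂ fun z => Complex.exp (lam * z) * p.eval z :=
    (Complex.differentiable_exp.comp (differentiable_id.const_mul lam)).mul p.differentiable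
  have h_int := circleIntegral_inv_prod_sub_smul_eq_sum_nodalWeight_smul hf.differentiableOn
    (univ_nonempty_iff.mpr ⟨⟨0, hm⟩⟩) ha.injOn fun i _ => mem_ball_zero_iff.mpr (hR i)
  simp only [smul_eq_mul, ← div_eq_inv_mul] at h_int
  rw [h_int, one_div, inv_mul_cancel_left₀ (by simp [Real.pi_ne_zero])]
  refine sum_congr rfl fun i _ => ?_
  rw [Lagrange.nodalWeight, prod_inv_distrib, inv_mul_eq_div]
end

section
/- Let K be a field, let n ≥ 1, let A be an n×n matrix over K, and let b ∈ Kⁿ. Assume that for every k ∈ {1, …, n} the square submatrix of A on rows and columns {k, …, n} has nonzero determinant (in particular A is invertible, so the affine system ℓ_i(x) = ∑_j A_{ij} x_j + b_i = 0, i = 1,…,n, has a unique solution x* = −A⁻¹b). Perform back-substitution: set ℓ_i^{(n)} = ℓ_i for i = 1, …, n; for k = n down to 1, the coefficient p_k of x_k in the affine form ℓ_k^{(k)} is nonzero, and substituting the solution x_k = σ_k(x₁,…,x_{k−1}) of ℓ_k^{(k)} = 0 into ℓ_i^{(k)} for i < k yields affine forms ℓ_i^{(k−1)} in the variables x₁,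 …, x_{k−1}. Then: (i) each pivot satisfies p_k = det A_{\{k,…,n\}} / det A_{\{k+1,…,n\}} (where A_S denotes the submatrix of A on rows and columns S and the determinant of the empty matrix is 1), so that the product p₁ p₂ ⋯ pₙ equals det A; and (ii) for every polynomial g ∈ K[x₁, …, xₙ], substituting successively x_n = σ_n, x_{n−1} = σ_{n−1}, …, x₁ = σ₁ into g yields the scalar g(x*); hence the iterated residue of the rational function g/(ℓ₁⋯ℓₙ), taken successively in the variables x_n, …, x₁ at the simple poles determined by ℓ_n^{(n)}, …, ℓ₁^{(1)} — namely the scalar g(x*)/(p₁⋯pₙ) — equals g(x*)/det A. -/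
open Finset

/-- One step of back-substitution: given the current system of affine forms with
coefficient matrix `C` and constant vector `d` (the pair `Cd`), solve the `k`-th form
`∑ⱼ C k j • xⱼ + d k = 0` for `x_k` (treating `C k k` as the pivot) and substitute the
result into all the other forms. -/
noncomputable def elimStep {K : Type*} [Field K] {n : ℕ} (k : Fin n)
    (Cd : Matrix (Fin n) (Fin n) K × (Fin n → K)) :
    Matrix (Fin n) (Fin n) K × (Fin n → K) :=
  ⟨fun i j => Cd.1 i j - Cd.1 i k * Cd.1 k j / Cd.1 k k,
    fun i => Cd.2 i - Cd.1 i k * Cd.2 k / Cd.1 k k⟩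

/-- The state of back-substitution after `s` steps: starting from the original system
`ℓᵢ(x) = ∑ⱼ A i j xⱼ + b i`, the variables `x_{n-1}, x_{n-2}, …, x_{n-s}` (0-indexed)
have been successively eliminated. -/
noncomputable def elim {K : Type*} [Field K] {n : ℕ} (hn : 0 < n)
    (A : Matrix (Fin n) (Fin n) K) (b : Fin n → K) :
    ℕ → Matrix (Fin n) (Fin n) K × (Fin n → K)
  | 0 => (A, b)
  | s + 1 => elimStep ⟨n - 1 - s, by omega⟩ (elim hn A b s)

/-- The pivot `p_k`: the coefficient of `x_k` in the form `ℓ_k^{(k)}` obtained after the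
variables `x_{k+1}, …, x_{n-1}` have been eliminated. -/
noncomputable def pivot {K : Type*} [Field K] {n : ℕ} (hn : 0 < n)
    (A : Matrix (Fin n) (Fin n) K) (b : Fin n → K) (k : Fin n) : K :=
  (elim hn A b (n - 1 - k.1)).1 k k

/-- The affine function `σ_k` of the variables `x₀, …, x_{k-1}` obtained by solving
`ℓ_k^{(k)} = 0` for `x_k`. -/
noncomputable def backSub {K : Type*} [Field K] {n : ℕ} (hn : 0 < n)
    (A : Matrix (Fin n) (Fin n) K) (b : Fin n → K) (k : Fin n) (x : Fin n → K) : K :=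
  -((∑ j ∈ Finset.univ.filter (fun j : Fin n => j < k),
        (elim hn A b (n - 1 - k.1)).1 k j * x j) +
      (elim hn A b (n - 1 - k.1)).2 k) / pivot hn A b k

/-- Substituting `x_k = σ_k(x₀, …, x_{k-1})` into a function `g` of the variables
`x₀, …, x_{n-1}`. -/
noncomputable def substOne {K : Type*} [Field K] {n : ℕ} (hn : 0 < n)
    (A : Matrix (Fin n) (Fin n) K) (b : Fin n → K) (k : Fin n)
    (g : (Fin n → K) → K) : (Fin n → K) → K :=
  fun x => g (Function.update x k (backSub hn A b k x))

/-- Successive substitution of `x_{n-1} = σ_{n-1}`, then `x_{n-2} = σ_{n-2}`, …; after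
`s` steps the variables `x_{n-1}, …, x_{n-s}` have been substituted away. -/
noncomputable def substAll {K : Type*} [Field K] {n : ℕ} (hn : 0 < n)
    (A : Matrix (Fin n) (Fin n) K) (b : Fin n → K) :
    ℕ → ((Fin n → K) → K) → ((Fin n → K) → K)
  | 0, g => g
  | s + 1, g => substOne hn A b ⟨n - 1 - s, by omega⟩ (substAll hn A b s g)

/-- The determinant of the square submatrix of `A` on the rows and columns
`{k, k+1, …, n-1}` (0-indexed); for `k = n` this is the determinant of the empty
matrix, namely `1`. -/
noncomputable def tailDet {K : Type*} [Field K] {n : ℕ}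
    (A : Matrix (Fin n) (Fin n) K) (k : ℕ) : K :=
  (A.submatrix (fun i : Fin (n - k) => (⟨k + i.1, by have := i.isLt; omega⟩ : Fin n))
      (fun i : Fin (n - k) => (⟨k + i.1, by have := i.isLt; omega⟩ : Fin n))).det

/-!
Eliminating `x_k` with a nonzero pivot replaces the block of the current coefficient matrix on
`{m, …, k}` by the Schur complement of its `(k, k)` entry, a matrix on `{m, …, k - 1}`; so the
determinant of the block drops by exactly the factor `p_k`. Starting from the blocks of `A`, the
determinant of the block `{m, …, n - 1 - s}` after `s` steps is `det A_{m..} / det A_{n-s..}`,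
whose `1 × 1` case is `p_k = det A_{k..} / det A_{k+1..}`; the product of the pivots telescopes
to `det A`. Each step also clears the column of the eliminated variable, so `ℓ_k^{(k)}` involves
only `x_0, …, x_k`, and each step takes linear combinations of the forms, so `x*` remains a common
zero. Hence `σ_k(x*_0, …, x*_{k-1}) = x*_k`, and the successive substitutions turn any `g` into
the constant `g(x*)`.
-/

namespace Matrix

variable {K : Type*} [Field K]

theorem det_eq_mul_det_schur_last {r : ℕ} (M : Matrix (Fin (r + 1)) (Fin (r + 1)) K)
    (h : M (Fin.last r) (Fin.last r) ≠ 0) :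
    M.det = M (Fin.last r) (Fin.last r) * (Matrix.of fun i j : Fin r => M i.castSucc j.castSucc -
      M i.castSucc (Fin.last r) * M (Fin.last r) j.castSucc / M (Fin.last r) (Fin.last r)).det := by
  set D : Matrix (Fin 1) (Fin 1) K := Matrix.of fun _ _ => M (Fin.last r) (Fin.last r)
  have : Invertible D := invertibleOfIsUnitDet D (by simpa [D] using h)
  have hD : (M.submatrix finSumFinEquiv finSumFinEquiv).toBlocks₂₂ = D := by
    ext i j; fin_cases i; fin_cases j; rfl
  rw [← det_submatrix_equiv_self finSumFinEquiv, ← fromBlocks_toBlocks (M.submatrix _ _), hD,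
    det_fromBlocks₂₂]
  congr 1
  · simp [D]
  · congr 1
    ext i j
    simp [toBlocks₁₁, toBlocks₁₂, toBlocks₂₁, Matrix.mul_apply, invOf_eq_nonsing_inv, D]
    rw [div_eq_mul_inv, mul_right_comm]
    rfl

end Matrix

section BackSubstitution

open Matrix

variable {K : Type*} [Field K] {n : ℕ}

def blockDet (M : Matrix (Fin n) (Fin n) K) (m r : ℕ) (h : m + r ≤ n) : K :=
  (M.submatrix (fun i : Fin r => Fin.castLE h (Fin.natAdd m i))
    (fun i : Fin r => Fin.castLE h (Fin.natAdd m i))).det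

theorem blockDet_one (M : Matrix (Fin n) (Fin n) K) {m : ℕ} (h : m + 1 ≤ n) {k : Fin n}
    (hk : k.1 = m) : blockDet M m 1 h = M k k := by
  have hm : Fin.castLE h (Fin.natAdd m 0) = k := Fin.ext hk.symm
  rw [blockDet, det_fin_one, submatrix_apply, hm]

theorem blockDet_elimStep (Cd : Matrix (Fin n) (Fin n) K × (Fin n → K)) {m r : ℕ}
    (h : m + (r + 1) ≤ n) {k : Fin n} (hk : k.1 = m + r) (hpiv : Cd.1 k k ≠ 0) :
    blockDet Cd.1 m (r + 1) h = Cd.1 k k * blockDet (elimStep k Cd).1 m r (by omega) := by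
  have hlast : Fin.castLE h (Fin.natAdd m (Fin.last r)) = k := Fin.ext hk.symm
  rw [blockDet, det_eq_mul_det_schur_last _ (by rwa [submatrix_apply, hlast])]
  simp only [submatrix_apply, hlast]
  rfl

theorem tailDet_of_le (A : Matrix (Fin n) (Fin n) K) {k : ℕ} (hk : n ≤ k) : tailDet A k = 1 :=
  have : IsEmpty (Fin (n - k)) := by rw [Nat.sub_eq_zero_of_le hk]; infer_instance
  det_isEmpty

theorem tailDet_zero (A : Matrix (Fin n) (Fin n) K) : tailDet A 0 = A.det := by
  simp only [tailDet, Nat.zero_add]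
  rfl

theorem elimStep_mulVec_add_eq_zero {k : Fin n} {Cd : Matrix (Fin n) (Fin n) K × (Fin n → K)}
    {x : Fin n → K} (hx : Cd.1 *ᵥ x + Cd.2 = 0) :
    (elimStep k Cd).1 *ᵥ x + (elimStep k Cd).2 = 0 := by
  ext i
  have hrow (l : Fin n) : ∑ j, Cd.1 l j * x j + Cd.2 l = 0 := congrFun hx l
  have hterm (j : Fin n) : (Cd.1 i j - Cd.1 i k * Cd.1 k j / Cd.1 k k) * x j =
      Cd.1 i j * x j - Cd.1 i k / Cd.1 k k * (Cd.1 k j * x j) := by ring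
  change ∑ j, (Cd.1 i j - _) * x j + (Cd.2 i - _) = 0
  rw [sum_congr rfl fun j _ => hterm j, sum_sub_distrib, ← mul_sum]
  linear_combination hrow i - Cd.1 i k / Cd.1 k k * hrow k

variable (hn : 0 < n) (A : Matrix (Fin n) (Fin n) K) (b : Fin n → K)

theorem tailDet_mul_blockDet_elim (hdet : ∀ k : ℕ, k < n → tailDet A k ≠ 0) {s m r : ℕ}
    (h : m + r + s = n) :
    tailDet A (m + r) * blockDet (elim hn A b s).1 m r (by omega) = tailDet A m := by
  induction s generalizing m r with
  | zero =>
    obtain rfl : r = n - m := by omega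
    rw [tailDet_of_le A (by omega), one_mul]
    rfl
  | succ s ih =>
    set k : Fin n := ⟨n - 1 - s, by omega⟩
    have hpiv := ih (m := m + r) (r := 1) (by omega)
    rw [blockDet_one _ _ (k := k) (by simp [k]; omega)] at hpiv
    have hpiv_ne : (elim hn A b s).1 k k ≠ 0 :=
      right_ne_zero_of_mul (hpiv ▸ hdet (m + r) (by omega))
    calc tailDet A (m + r) * blockDet (elim hn A b (s + 1)).1 m r _
        = tailDet A (m + r + 1) * blockDet (elim hn A b s).1 m (r + 1) (by omega) := by
          rw [blockDet_elimStep _ _ (by simp [k]; omega) hpiv_ne, ← mul_assoc, hpiv]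
          rfl
      _ = tailDet A m := ih (r := r + 1) (by omega)

theorem tailDet_succ_mul_pivot (hdet : ∀ k : ℕ, k < n → tailDet A k ≠ 0) (k : Fin n) :
    tailDet A (k + 1) * pivot hn A b k = tailDet A k := by
  have h := tailDet_mul_blockDet_elim hn A b hdet (m := k) (r := 1) (s := n - 1 - k) (by omega)
  rwa [blockDet_one _ _ rfl] at h

theorem tailDet_ne_zero (hdet : ∀ k : ℕ, k < n → tailDet A k ≠ 0) (k : ℕ) :
    tailDet A k ≠ 0 := by
  rcases lt_or_ge k n with hk | hk
  · exact hdet k hk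
  · simp [tailDet_of_le A hk]

theorem pivot_ne_zero (hdet : ∀ k : ℕ, k < n → tailDet A k ≠ 0) (k : Fin n) :
    pivot hn A b k ≠ 0 :=
  right_ne_zero_of_mul (tailDet_succ_mul_pivot hn A b hdet k ▸ hdet k k.isLt)

theorem pivot_eq_div (hdet : ∀ k : ℕ, k < n → tailDet A k ≠ 0) (k : Fin n) :
    pivot hn A b k = tailDet A k / tailDet A (k + 1) := by
  rw [eq_div_iff (tailDet_ne_zero A hdet _), mul_comm, tailDet_succ_mul_pivot hn A b hdet]

theorem prod_pivot_eq_det (hdet : ∀ k : ℕ, k < n → tailDet A k ≠ 0) :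
    ∏ k, pivot hn A b k = A.det := by
  have telescope :
      ∏ k ∈ range n, tailDet A k / tailDet A (k + 1) = tailDet A 0 / tailDet A n :=
    prod_range_induction _ (fun j => tailDet A 0 / tailDet A j)
      (div_self (tailDet_ne_zero A hdet 0)) n
      (fun j hj => (div_mul_div_cancel₀ (hdet j hj)).symm)
  simp only [pivot_eq_div hn A b hdet]
  rw [Fin.prod_univ_eq_prod_range (fun k => tailDet A k / tailDet A (k + 1)), telescope,
    tailDet_of_le A le_rfl, div_one, tailDet_zero]

theorem pivot_eq_elim_apply {s : ℕ} (hs : s < n) :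
    pivot hn A b ⟨n - 1 - s, by omega⟩ =
      (elim hn A b s).1 ⟨n - 1 - s, by omega⟩ ⟨n - 1 - s, by omega⟩ := by
  rw [pivot, show n - 1 - (n - 1 - s) = s by omega]

theorem elim_apply_eq_zero (hdet : ∀ k : ℕ, k < n → tailDet A k ≠ 0) (s : ℕ) {i j : Fin n}
    (hj : n - s ≤ j) : (elim hn A b s).1 i j = 0 := by
  induction s generalizing i with
  | zero => omega
  | succ s ih =>
    show (elim hn A b s).1 i j -
      (elim hn A b s).1 i _ * (elim hn A b s).1 _ j / (elim hn A b s).1 _ _ = 0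
    by_cases hj' : n - s ≤ j
    · simp [ih hj']
    · have hpiv := pivot_ne_zero hn A b hdet ⟨n - 1 - s, by omega⟩
      rw [pivot_eq_elim_apply hn A b (by omega)] at hpiv
      rw [show j = ⟨n - 1 - s, by omega⟩ from Fin.ext (by simp; omega),
        mul_div_cancel_right₀ _ hpiv, sub_self]

theorem elim_mulVec_add_eq_zero {x : Fin n → K} (hx : A *ᵥ x + b = 0) (s : ℕ) :
    (elim hn A b s).1 *ᵥ x + (elim hn A b s).2 = 0 := by
  induction s with
  | zero => exact hx
  | succ s ih => exact elimStep_mulVec_add_eq_zero ih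

theorem backSub_eq_of_solution (hdet : ∀ k : ℕ, k < n → tailDet A k ≠ 0) {x : Fin n → K}
    (hx : A *ᵥ x + b = 0) (k : Fin n) {y : Fin n → K} (hy : ∀ j < k, y j = x j) :
    backSub hn A b k y = x k := by
  set C := (elim hn A b (n - 1 - k)).1
  set d := (elim hn A b (n - 1 - k)).2
  have hrow : ∑ j, C k j * x j + d k = 0 :=
    congrFun (elim_mulVec_add_eq_zero hn A b hx (n - 1 - k)) k
  have htail : ∑ j ∈ univ.filter (fun j => ¬ j < k), C k j * x j = C k k * x k := by
    refine sum_eq_single_of_mem k (by simp) fun j hj hjk => ?_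
    have : k.1 < j.1 := lt_of_le_of_ne (by simpa using hj) (Fin.val_ne_of_ne (Ne.symm hjk))
    rw [show C k j = 0 from elim_apply_eq_zero hn A b hdet _ (by omega), zero_mul]
  rw [← sum_filter_add_sum_filter_not _ (fun j => j < k), htail] at hrow
  have hpiv : C k k ≠ 0 := pivot_ne_zero hn A b hdet k
  change -(∑ j ∈ univ.filter (fun j => j < k), C k j * y j + d k) / C k k = x k
  rw [sum_congr rfl fun j hj => by rw [hy j (by simpa using hj)], div_eq_iff hpiv]
  linear_combination -hrow

theorem substAll_eq_of_solution (hdet : ∀ k : ℕ, k < n → tailDet A k ≠ 0) {x : Fin n → K}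
    (hx : A *ᵥ x + b = 0) (g : (Fin n → K) → K) {s : ℕ} (hs : s ≤ n) {y : Fin n → K}
    (hy : ∀ j : Fin n, j + s < n → y j = x j) :
    substAll hn A b s g y = g x := by
  induction s generalizing y with
  | zero => rw [substAll, funext fun j => hy j (by omega)]
  | succ s ih =>
    set k : Fin n := ⟨n - 1 - s, by omega⟩
    have hk : backSub hn A b k y = x k := backSub_eq_of_solution hn A b hdet hx k
      fun j hj => hy j (by simp [Fin.lt_def, k] at hj; omega)
    refine ih (by omega) fun j hj => ?_
    by_cases hjk : j = k
    · rw [hjk, Function.update_self, hk]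
    · rw [Function.update_of_ne hjk]
      exact hy j (by have := Fin.val_ne_of_ne hjk; simp [k] at this; omega)

end BackSubstitution

/-- Back-substitution as iterated residues (the computational core of the paper's
Lemma in Section 4).  Assume every lower-right square submatrix of `A` on the index
sets `{k, …, n-1}` has nonzero determinant.  Then:
all the pivots are nonzero; each pivot is the ratio of consecutive lower-right minors,
`p_k = det A_{{k,…,n-1}} / det A_{{k+1,…,n-1}}`, so that their product is `det A`;
the affine system `A x + b = 0` has the unique solution `x* = −A⁻¹ b`;
substituting successively `x_{n-1} = σ_{n-1}, …, x₀ = σ₀` into any function `g` of the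
variables yields the constant `g(x*)`; and hence the iterated residue
`g(x*)/(p₀⋯p_{n-1})` equals `g(x*)/det A`. -/
theorem backSubstitution_iterated_residue
    {K : Type*} [Field K] (n : ℕ) (hn : 0 < n)
    (A : Matrix (Fin n) (Fin n) K) (b : Fin n → K)
    (hdet : ∀ k : ℕ, k < n → tailDet A k ≠ 0) :
    (∀ k : Fin n, pivot hn A b k ≠ 0) ∧
    (∀ k : Fin n, pivot hn A b k = tailDet A k.1 / tailDet A (k.1 + 1)) ∧
    ((∏ k, pivot hn A b k) = A.det) ∧
    (A.mulVec (-(A⁻¹.mulVec b)) = -b) ∧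
    (∀ x : Fin n → K, A.mulVec x = -b → x = -(A⁻¹.mulVec b)) ∧
    (∀ g : (Fin n → K) → K, ∀ x : Fin n → K,
        substAll hn A b n g x = g (-(A⁻¹.mulVec b))) ∧
    (∀ g : (Fin n → K) → K,
        g (-(A⁻¹.mulVec b)) / ∏ k, pivot hn A b k =
          g (-(A⁻¹.mulVec b)) / A.det) := by
  have hA : IsUnit A.det := (tailDet_zero A ▸ hdet 0 hn).isUnit
  have hsolve : A.mulVec (-(A⁻¹.mulVec b)) = -b := by
    rw [Matrix.mulVec_neg, Matrix.mulVec_mulVec, Matrix.mul_nonsing_inv A hA, Matrix.one_mulVec]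
  refine ⟨pivot_ne_zero hn A b hdet, pivot_eq_div hn A b hdet, prod_pivot_eq_det hn A b hdet,
    hsolve, fun x hx => ?_, fun g x => substAll_eq_of_solution hn A b hdet ?_ g le_rfl (by omega),
    fun g => by rw [prod_pivot_eq_det hn A b hdet]⟩
  · rw [← Matrix.mulVec_neg, ← hx, Matrix.mulVec_mulVec, Matrix.nonsing_inv_mul A hA,
      Matrix.one_mulVec]
  · rw [hsolve, neg_add_cancel]
end

section
/- Let t₁, t₂ ∈ ℂ with 0 < |t₁| < 1, 0 < |t₂| < 1 and t₁ ≠ t₂. Then (1/(2πi)) ∮_{|s|=1} (1 − t₁t₂) / ( s (1 − s t₁)(1 − s t₂)(1 − t₂ s^{-1})(1 − t₁ s^{-1}) ) ds = (1 − t₁t₂)/((1 − t₁t₂)(1 − t₂²)(1 − t₁ t₂^{-1})) + (1 − t₁t₂)/((1 − t₁²)(1 − t₁t₂)(1 − t₂ t₁^{-1})). -/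
open Complex Metric Set Real

/-! On the unit circle the integrand is `g s / ((s - t₁) * (s - t₂))` with
`g s = (1 - t₁ t₂) s / ((1 - s t₁) (1 - s t₂))`, which is holomorphic on the closed unit disc
because `|t₁|, |t₂| < 1`. Splitting `1 / ((s - t₁) (s - t₂))` into partial fractions and applying
the Cauchy integral formula at `t₁` and at `t₂` gives `2πi (g t₁ - g t₂) / (t₁ - t₂)`, which is
`2πi` times the sum of the two residues. -/

theorem circleIntegral_inv_sub_mul_sub_smul {E : Type*} [NormedAddCommGroup E] [NormedSpace ℂ E]
    [CompleteSpace E] {f : ℂ → E} {c a b : ℂ} {R : ℝ}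
    (hf : DifferentiableOn ℂ f (closedBall c R)) (ha : a ∈ ball c R) (hb : b ∈ ball c R)
    (hab : a ≠ b) :
    (∮ z in C(c, R), ((z - a) * (z - b))⁻¹ • f z) = (2 * π * I / (a - b)) • (f a - f b) := by
  have hR : 0 ≤ R := (nonempty_ball.mp ⟨a, ha⟩).le
  have hne : ∀ w ∈ ball c R, ∀ z ∈ sphere c R, z - w ≠ 0 := fun w hw z hz =>
    sub_ne_zero.mpr (ne_of_mem_of_not_mem hz fun h => (mem_ball.mp hw).ne (mem_sphere.mp h))
  have hint : ∀ w ∈ ball c R, CircleIntegrable (fun z => (z - w)⁻¹ • f z) c R := fun w hw =>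
    ((continuousOn_id.sub continuousOn_const).inv₀ (hne w hw)).smul
      (hf.continuousOn.mono sphere_subset_closedBall) |>.circleIntegrable hR
  have partial_fractions : EqOn (fun z => ((z - a) * (z - b))⁻¹ • f z)
      (fun z => (a - b)⁻¹ • ((z - a)⁻¹ • f z - (z - b)⁻¹ • f z)) (sphere c R) := by
    intro z hz
    have hza := hne a ha z hz
    have hzb := hne b hb z hz
    have hab' : a - b ≠ 0 := sub_ne_zero.mpr hab
    simp only [smul_smul, ← sub_smul]
    congr 1
    field_simp
    ring
  rw [circleIntegral.integral_congr hR partial_fractions, circleIntegral.integral_smul,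
    circleIntegral.integral_sub (hint a ha) (hint b hb), hf.circleIntegral_sub_inv_smul ha,
    hf.circleIntegral_sub_inv_smul hb, ← smul_sub, smul_smul, div_eq_inv_mul]

theorem one_sub_mul_ne_zero_of_norm_le_one {A : Type*} [NormedRing A] [NormOneClass A]
    {s t : A} (hs : ‖s‖ ≤ 1) (ht : ‖t‖ < 1) : 1 - s * t ≠ 0 := by
  refine sub_ne_zero.mpr fun h => ?_
  have : ‖s * t‖ < 1 :=
    (norm_mul_le s t).trans_lt ((mul_le_of_le_one_left (norm_nonneg _) hs).trans_lt ht)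
  simp [← h] at this

/-- The Nekrasov–Shadchin contour integral computing the character of `H⁰` of the
structure sheaf of the hyper-Kähler quotient `ℂ⁴ /// ℂ*`: for `0 < |t₁| < 1`,
`0 < |t₂| < 1`, `t₁ ≠ t₂`, the average over the unit circle of the character equals the
sum of the residues at the two simple poles `s = t₁`, `s = t₂` inside the unit disc. -/
theorem nekrasov_shadchin_character_contour_integral
    (t₁ t₂ : ℂ) (h₁ : 0 < ‖t₁‖) (h₁' : ‖t₁‖ < 1)
    (h₂ : 0 < ‖t₂‖) (h₂' : ‖t₂‖ < 1) (hne : t₁ ≠ t₂) :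
    (1 / (2 * (Real.pi : ℂ) * Complex.I)) *
        (∮ s in C((0 : ℂ), 1),
          (1 - t₁ * t₂) /
            (s * (1 - s * t₁) * (1 - s * t₂) * (1 - t₂ * s⁻¹) * (1 - t₁ * s⁻¹))) =
      (1 - t₁ * t₂) / ((1 - t₁ * t₂) * (1 - t₂ ^ 2) * (1 - t₁ * t₂⁻¹)) +
        (1 - t₁ * t₂) / ((1 - t₁ ^ 2) * (1 - t₁ * t₂) * (1 - t₂ * t₁⁻¹)) := by
  have ht₁ : t₁ ≠ 0 := norm_pos_iff.mp h₁
  have ht₂ : t₂ ≠ 0 := norm_pos_iff.mp h₂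
  have hden : ∀ s ∈ closedBall (0 : ℂ) 1, (1 - s * t₁) * (1 - s * t₂) ≠ 0 := fun s hs =>
    have hs : ‖s‖ ≤ 1 := mem_closedBall_zero_iff.mp hs
    mul_ne_zero (one_sub_mul_ne_zero_of_norm_le_one hs h₁')
      (one_sub_mul_ne_zero_of_norm_le_one hs h₂')
  set g : ℂ → ℂ := fun s => (1 - t₁ * t₂) * s / ((1 - s * t₁) * (1 - s * t₂)) with hg
  have hg_diff : DifferentiableOn ℂ g (closedBall 0 1) :=
    DifferentiableOn.div (by fun_prop) (by fun_prop) hden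
  have integrand_eq : EqOn
      (fun s => (1 - t₁ * t₂) /
        (s * (1 - s * t₁) * (1 - s * t₂) * (1 - t₂ * s⁻¹) * (1 - t₁ * s⁻¹)))
      (fun s => ((s - t₁) * (s - t₂))⁻¹ • g s) (sphere 0 1) := by
    intro s hs
    have hs0 : s ≠ 0 := ne_zero_of_mem_unit_sphere ⟨s, hs⟩
    have hden_s := hden s (sphere_subset_closedBall hs)
    simp only [hg, smul_eq_mul]
    field_simp
  have ht₁_mem : t₁ ∈ ball (0 : ℂ) 1 := mem_ball_zero_iff.mpr h₁'
  have ht₂_mem : t₂ ∈ ball (0 : ℂ) 1 := mem_ball_zero_iff.mpr h₂'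
  have hden_t₁ := hden t₁ (ball_subset_closedBall ht₁_mem)
  have hden_t₂ := hden t₂ (ball_subset_closedBall ht₂_mem)
  rw [circleIntegral.integral_congr zero_le_one integrand_eq,
    circleIntegral_inv_sub_mul_sub_smul hg_diff ht₁_mem ht₂_mem hne]
  have hsub : t₁ - t₂ ≠ 0 := sub_ne_zero.mpr hne
  simp only [hg, smul_eq_mul]
  field_simp
  ring
end
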